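/- Let p ≥ 1. Assume: ν is a Lévy measure on ℝ and there is β ∈ [0, 2) such that ∫_{|x|≤1} |x|^r ν(dx) < ∞ for every r > β; σ : ℝ × Ω → ℝ is a jointly measurable process on a probability space (Ω, F, P) with |σ_s(ω)| ≤ M for all s ∈ [−δ, ∞), ω ∈ Ω, for some M > 0; there exist ρ ∈ (0, 1] and β' > β with β' ≥ p such that E[ ( ∫_ℝ max(|H_s|^ρ, |H_s|^{β'}) ds )^{max(1, p/2)} ] < ∞, where H_s = g^{(k)}(−s) σ_s 1_{(−∞,−δ]}(s); and α > k − 1/max(β, p). Then for every t > 0 and every a ∈ (0, 1]: ∫_0^t E[ ‖ f_t(u, ·) ‖_{p,ν_a}^p ] du < ∞, where f_t(u, s)(ω) = g^{(k)}(u − s) σ_s(ω) 1_{[0,t]}(u) 1_{(−∞,u)}(s) and ν_a denotes the restriction of ν to [−a, a]. -/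

import Mathlib

open MeasureTheory Set
open scoped ENNReal

noncomputable section

/-- `φ_q(x) = |x|^q · 1_{|x|>1} + x² · 1_{|x|≤1}`. -/
def phi (q x : ℝ) : ℝ := if |x| ≤ 1 then x ^ 2 else |x| ^ q

/-- `Φ_{q,ν}(F) = ∫_ℝ ∫_ℝ φ_q(F(s)·u) ds ν(du)`. -/
def PhiFun (q : ℝ) (ν : Measure ℝ) (F : ℝ → ℝ) : ℝ≥0∞ :=
  ∫⁻ u : ℝ, (∫⁻ s : ℝ, ENNReal.ofReal (phi q (F s * u))) ∂ν

/-- `‖F‖_{q,ν} = inf {λ > 0 : Φ_{q,ν}(F/λ) ≤ 1}`, with `inf ∅ = ∞`. -/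
def levyNorm (q : ℝ) (ν : Measure ℝ) (F : ℝ → ℝ) : ℝ≥0∞ :=
  sInf ((fun l : ℝ => ENNReal.ofReal l) ''
    {l : ℝ | 0 < l ∧ PhiFun q ν (fun s => F s / l) ≤ 1})

/-- The random field `f_t(u, s)(ω) = g^{(k)}(u−s) σ_s(ω) 1_{[0,t]}(u) 1_{(−∞,u)}(s)`. -/
def ftField {Ω : Type*} (g : ℝ → ℝ) (k : ℕ) (σ : ℝ → Ω → ℝ) (t u s : ℝ) (ω : Ω) : ℝ :=
  (if 0 ≤ u ∧ u ≤ t then (1 : ℝ) else 0) * (if s < u then (1 : ℝ) else 0) *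
    (iteratedDeriv k g (u - s) * σ s ω)

/-!
Choose `q` with `p ≤ q ≤ β'`, `β < q` and `q (k - α) < 1`, as `max β p · (k - α) < 1` allows, and
put `r = min 2 q > β`. As `ν_a` lives on `[-1, 1]` and `φ_p(y x) ≤ |x|^r max(|y|^ρ, |y|^q)` for
`|x| ≤ 1`, `Φ_{p,ν_a}(f_t(u, ·))` is at most the finite moment `∫ |x|^r dν_a` times
`∫ max(|f_t(u, s)|^ρ, |f_t(u, s)|^q) ds`. For `s < -δ` the monotonicity of `|g^{(k)}|` dominates
`f_t(u, s)` by `H_s`; for `s ∈ [-δ, u)` it is at most `M max(C₁ (u - s)^{α-k}, B)`, with `B` a bound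
of `|g^{(k)}|` on `[δ, t + δ]`, which is integrable since `ρ (k - α), q (k - α) < 1`. Finally the
scaling `φ_p(c z) ≤ c^{min 2 p} φ_p(z)` for `0 ≤ c ≤ 1` gives `‖F‖^p ≤ (1 + Φ(F))^{max(1, p/2)}`,
a bound uniform in `u ∈ (0, t]` whose expectation is finite by the assumption on `H`.
-/

open Filter Topology

def maxRpow (ρ q y : ℝ) : ℝ := max (|y| ^ ρ) (|y| ^ q)

section maxRpow

variable {ρ q r : ℝ}

lemma maxRpow_nonneg (ρ q y : ℝ) : 0 ≤ maxRpow ρ q y :=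
  le_max_of_le_left (Real.rpow_nonneg (abs_nonneg y) ρ)

lemma maxRpow_zero (hρ : 0 < ρ) (hq : 0 < q) : maxRpow ρ q 0 = 0 := by
  simp [maxRpow, Real.zero_rpow hρ.ne', Real.zero_rpow hq.ne']

lemma maxRpow_mono (hρ : 0 ≤ ρ) (hq : 0 ≤ q) {y z : ℝ} (h : |y| ≤ |z|) :
    maxRpow ρ q y ≤ maxRpow ρ q z :=
  max_le_max (Real.rpow_le_rpow (abs_nonneg y) h hρ) (Real.rpow_le_rpow (abs_nonneg y) h hq)

lemma rpow_abs_le_maxRpow (hρ : 0 ≤ ρ) (hρr : ρ ≤ r) (hrq : r ≤ q) (y : ℝ) :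
    |y| ^ r ≤ maxRpow ρ q y := by
  rcases le_total |y| 1 with hy | hy
  · exact le_max_of_le_left (Real.rpow_le_rpow_of_exponent_ge' (abs_nonneg y) hy hρ hρr)
  · exact le_max_of_le_right (Real.rpow_le_rpow_of_exponent_le hy hrq)

lemma maxRpow_le_maxRpow (hρ : 0 ≤ ρ) (hρq : ρ ≤ q) {q' : ℝ} (hqq' : q ≤ q') (y : ℝ) :
    maxRpow ρ q y ≤ maxRpow ρ q' y :=
  max_le (le_max_left _ _) (rpow_abs_le_maxRpow hρ hρq hqq' y)

lemma maxRpow_le_add_of_abs_le_max (hρ : 0 ≤ ρ) (hq : 0 ≤ q) {y a b : ℝ} (h : |y| ≤ max a b) :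
    maxRpow ρ q y ≤ maxRpow ρ q a + maxRpow ρ q b := by
  rcases le_total a b with hab | hab
  · rw [max_eq_right hab] at h
    exact (maxRpow_mono hρ hq (h.trans (le_abs_self b))).trans
      (le_add_of_nonneg_left (maxRpow_nonneg ρ q a))
  · rw [max_eq_left hab] at h
    exact (maxRpow_mono hρ hq (h.trans (le_abs_self a))).trans
      (le_add_of_nonneg_right (maxRpow_nonneg ρ q b))

lemma maxRpow_mul_le (hρ : 0 ≤ ρ) (hρr : ρ ≤ r) (hrq : r ≤ q) {x : ℝ} (hx : |x| ≤ 1) (y : ℝ) :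
    maxRpow r q (y * x) ≤ |x| ^ r * maxRpow ρ q y := by
  have hr : 0 ≤ r := hρ.trans hρr
  have hxq : |x| ^ q ≤ |x| ^ r := Real.rpow_le_rpow_of_exponent_ge' (abs_nonneg x) hx hr hrq
  rw [maxRpow, abs_mul, Real.mul_rpow (abs_nonneg y) (abs_nonneg x),
    Real.mul_rpow (abs_nonneg y) (abs_nonneg x)]
  apply max_le
  · rw [mul_comm]
    exact mul_le_mul_of_nonneg_left (rpow_abs_le_maxRpow hρ hρr hrq y) (by positivity)
  · calc |y| ^ q * |x| ^ q ≤ |x| ^ r * |y| ^ q := by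
          rw [mul_comm]; exact mul_le_mul_of_nonneg_right hxq (by positivity)
      _ ≤ |x| ^ r * maxRpow ρ q y := mul_le_mul_of_nonneg_left (le_max_right _ _) (by positivity)

end maxRpow

lemma phi_le_maxRpow {p q r : ℝ} (hr0 : 0 ≤ r) (hr2 : r ≤ 2) (hpq : p ≤ q) (z : ℝ) :
    phi p z ≤ maxRpow r q z := by
  unfold phi
  split_ifs with hz
  · rw [← sq_abs, ← Real.rpow_two]
    exact le_max_of_le_left (Real.rpow_le_rpow_of_exponent_ge' (abs_nonneg z) hz hr0 hr2)
  · exact le_max_of_le_right (Real.rpow_le_rpow_of_exponent_le (not_le.mp hz).le hpq)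

lemma phi_const_mul_le {p c : ℝ} (hp : 0 ≤ p) (hc0 : 0 ≤ c) (hc1 : c ≤ 1) (z : ℝ) :
    phi p (c * z) ≤ c ^ min 2 p * phi p z := by
  have hm0 : 0 ≤ min 2 p := le_min zero_le_two hp
  have hsq : ∀ x : ℝ, x ^ 2 = |x| ^ (2 : ℝ) := fun x => by rw [Real.rpow_two, sq_abs]
  have hw : 0 ≤ |z| := abs_nonneg z
  simp only [phi, hsq, abs_mul, abs_of_nonneg hc0]
  split_ifs with hcz hz hz
  · rw [Real.mul_rpow hc0 hw]
    exact mul_le_mul_of_nonneg_right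
      (Real.rpow_le_rpow_of_exponent_ge' hc0 hc1 hm0 (min_le_left _ _)) (by positivity)
  · calc (c * |z|) ^ (2 : ℝ) ≤ (c * |z|) ^ min 2 p :=
          Real.rpow_le_rpow_of_exponent_ge' (by positivity) hcz hm0 (min_le_left _ _)
      _ = c ^ min 2 p * |z| ^ min 2 p := Real.mul_rpow hc0 hw
      _ ≤ c ^ min 2 p * |z| ^ p := by
          gcongr
          exacts [(not_le.mp hz).le, min_le_right _ _]
  · exact absurd (mul_le_one₀ hc1 hw hz) hcz
  · rw [Real.mul_rpow hc0 hw]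
    exact mul_le_mul_of_nonneg_right
      (Real.rpow_le_rpow_of_exponent_ge' hc0 hc1 hm0 (min_le_right _ _)) (by positivity)

lemma PhiFun_div_le {p l : ℝ} (hp : 0 ≤ p) (hl : 1 ≤ l) (ν : Measure ℝ) (F : ℝ → ℝ) :
    PhiFun p ν (fun s => F s / l) ≤ ENNReal.ofReal (l⁻¹ ^ min 2 p) * PhiFun p ν F := by
  have hl0 : 0 < l := by linarith
  unfold PhiFun
  rw [← lintegral_const_mul' _ _ ENNReal.ofReal_ne_top]
  refine lintegral_mono fun u => ?_
  rw [← lintegral_const_mul' _ _ ENNReal.ofReal_ne_top]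
  refine lintegral_mono fun s => ?_
  rw [← ENNReal.ofReal_mul (by positivity), div_mul_eq_mul_div, div_eq_inv_mul]
  exact ENNReal.ofReal_le_ofReal
    (phi_const_mul_le hp (inv_nonneg.2 hl0.le) (inv_le_one_of_one_le₀ hl) _)

lemma div_min_two_self {p : ℝ} (hp : 0 < p) : p / min 2 p = max 1 (p / 2) := by
  rcases le_total p 2 with h | h
  · rw [min_eq_right h, div_self hp.ne', max_eq_left (by linarith)]
  · rw [min_eq_left h, max_eq_right (by linarith)]

lemma levyNorm_rpow_le {p : ℝ} (hp : 0 < p) (ν : Measure ℝ) (F : ℝ → ℝ) :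
    levyNorm p ν F ^ p ≤ (1 + PhiFun p ν F) ^ max 1 (p / 2) := by
  obtain hΦ | hΦ := eq_or_ne (PhiFun p ν F) ⊤
  · rw [hΦ, add_top, ENNReal.top_rpow_of_pos (by positivity)]
    exact le_top
  set c := (PhiFun p ν F).toReal
  set m := min 2 p
  have hm : 0 < m := lt_min two_pos hp
  have hc : 0 ≤ c := ENNReal.toReal_nonneg
  -- `l ^ m = 1 + Φ(F)` makes `l` admissible in the infimum defining the norm
  set l := (1 + c) ^ m⁻¹
  have hl : 1 ≤ l := Real.one_le_rpow (by linarith) (by positivity)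
  have hlm : l ^ m = 1 + c := Real.rpow_inv_rpow (by positivity) hm.ne'
  have hΦl : PhiFun p ν (fun s => F s / l) ≤ 1 := by
    calc _ ≤ ENNReal.ofReal (l⁻¹ ^ m) * PhiFun p ν F := PhiFun_div_le hp.le hl ν F
      _ = ENNReal.ofReal (c / (1 + c)) := by
        rw [← ENNReal.ofReal_toReal hΦ, ← ENNReal.ofReal_mul (by positivity),
          Real.inv_rpow (by positivity), hlm, inv_mul_eq_div]
      _ ≤ 1 := ENNReal.ofReal_le_one.2 (div_le_one_of_le₀ (by linarith) (by positivity))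
  have hnorm : levyNorm p ν F ≤ ENNReal.ofReal l := sInf_le ⟨l, ⟨by positivity, hΦl⟩, rfl⟩
  calc levyNorm p ν F ^ p ≤ ENNReal.ofReal l ^ p := ENNReal.rpow_le_rpow hnorm hp.le
    _ = (1 + PhiFun p ν F) ^ max 1 (p / 2) := by
      rw [ENNReal.ofReal_rpow_of_nonneg (by positivity) hp.le, ← Real.rpow_mul (by positivity),
        inv_mul_eq_div, div_min_two_self hp,
        ← ENNReal.ofReal_rpow_of_nonneg (by positivity) (by positivity),
        ENNReal.ofReal_add zero_le_one hc, ENNReal.ofReal_one, ENNReal.ofReal_toReal hΦ]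

lemma PhiFun_le_mul_lintegral_maxRpow {p q ρ r : ℝ} (hρ : 0 ≤ ρ) (hρr : ρ ≤ r) (hr2 : r ≤ 2)
    (hrq : r ≤ q) (hpq : p ≤ q) {ν : Measure ℝ} (hν : ∀ᵐ x ∂ν, |x| ≤ 1) (F : ℝ → ℝ) :
    PhiFun p ν F ≤
      (∫⁻ x, ENNReal.ofReal (|x| ^ r) ∂ν) * ∫⁻ s, ENNReal.ofReal (maxRpow ρ q (F s)) := by
  rw [PhiFun, ← lintegral_mul_const _ (by fun_prop)]
  refine lintegral_mono_ae (hν.mono fun x hx => ?_)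
  rw [← lintegral_const_mul' _ _ ENNReal.ofReal_ne_top]
  refine lintegral_mono fun s => ?_
  rw [← ENNReal.ofReal_mul (by positivity)]
  exact ENNReal.ofReal_le_ofReal
    ((phi_le_maxRpow (hρ.trans hρr) hr2 hpq _).trans (maxRpow_mul_le hρ hρr hrq hx _))

lemma levyNorm_rpow_le_of_ae_abs_le_one {p q ρ r : ℝ} (hp : 0 < p) (hρ : 0 ≤ ρ) (hρr : ρ ≤ r)
    (hr2 : r ≤ 2) (hrq : r ≤ q) (hpq : p ≤ q) {ν : Measure ℝ} (hν : ∀ᵐ x ∂ν, |x| ≤ 1)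
    (F : ℝ → ℝ) :
    levyNorm p ν F ^ p ≤ (1 + (∫⁻ x, ENNReal.ofReal (|x| ^ r) ∂ν) *
      ∫⁻ s, ENNReal.ofReal (maxRpow ρ q (F s))) ^ max 1 (p / 2) := by
  refine (levyNorm_rpow_le hp ν F).trans (ENNReal.rpow_le_rpow ?_ (by positivity))
  gcongr
  exact PhiFun_le_mul_lintegral_maxRpow hρ hρr hr2 hrq hpq hν F

lemma integrableOn_maxRpow_mul_rpow {ρ q θ : ℝ} (hρ : -1 < θ * ρ) (hq : -1 < θ * q) (c T : ℝ) :
    IntegrableOn (fun v => maxRpow ρ q (c * v ^ θ)) (Ioc 0 T) := by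
  have hpow : ∀ r, -1 < θ * r → IntegrableOn (fun v => |c| ^ r * v ^ (θ * r)) (Ioc 0 T) :=
    fun r hr => (intervalIntegral.intervalIntegrable_rpow' hr).1.const_mul _
  refine IntegrableOn.congr_fun (Integrable.sup (hpow ρ hρ) (hpow q hq)) (fun v hv => ?_)
    measurableSet_Ioc
  have hv : 0 < v := hv.1
  simp only [Pi.sup_apply, maxRpow, abs_mul, abs_of_pos (Real.rpow_pos_of_pos hv θ),
    Real.mul_rpow (abs_nonneg c) (Real.rpow_nonneg hv.le _), ← Real.rpow_mul hv.le]

lemma ContDiffOn.continuousOn_iteratedDeriv_of_isOpen {f : ℝ → ℝ} {s : Set ℝ} {n : WithTop ℕ∞}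
    {m : ℕ} (hf : ContDiffOn ℝ n f s) (hmn : m ≤ n) (hs : IsOpen s) :
    ContinuousOn (iteratedDeriv m f) s :=
  (hf.continuousOn_iteratedDerivWithin hmn hs.uniqueDiffOn).congr
    (iteratedDerivWithin_of_isOpen hs).symm

lemma exists_abs_le_max_of_continuousOn {G : ℝ → ℝ} (hG : ContinuousOn G (Ioi 0)) {δ C θ : ℝ}
    (hδ : 0 < δ) (hnear : ∀ v ∈ Ioo 0 δ, |G v| ≤ C * v ^ θ) (T : ℝ) :
    ∃ B, ∀ v ∈ Ioc 0 T, |G v| ≤ max (C * v ^ θ) B := by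
  obtain ⟨B, hB⟩ := isCompact_Icc.exists_bound_of_continuousOn
    (hG.mono fun v (hv : v ∈ Icc δ T) => hδ.trans_le hv.1)
  refine ⟨B, fun v hv => ?_⟩
  rcases lt_or_ge v δ with hvδ | hvδ
  · exact le_max_of_le_left (hnear v ⟨hv.1, hvδ⟩)
  · exact le_max_of_le_right (hB v ⟨hvδ, hv.2⟩)

lemma neg_one_lt_mul_of_le {θ r q : ℝ} (hr : 0 ≤ r) (hrq : r ≤ q) (hq : -1 < θ * q) :
    -1 < θ * r := by
  rcases le_total 0 θ with hθ | hθ <;> nlinarith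

lemma exists_moment_exponent {β β' p k α : ℝ} (hp : 0 < p) (hβ' : β < β') (hpβ' : p ≤ β')
    (hαk : k - 1 / max β p < α) : ∃ q, p ≤ q ∧ β < q ∧ q ≤ β' ∧ -1 < (α - k) * q := by
  have hθ : -1 < (α - k) * max β p := by
    have := (lt_div_iff₀ (lt_max_of_lt_right hp)).1 (sub_lt_comm.1 hαk)
    linarith
  have hev : ∀ᶠ r in 𝓝 (max β p), -1 < (α - k) * r :=
    (continuous_const.mul continuous_id).continuousAt.eventually (lt_mem_nhds hθ)
  obtain ⟨q₀, hq₀, hq₀m⟩ :=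
    ((hev.filter_mono nhdsWithin_le_nhds).and (self_mem_nhdsWithin (s := Ioi (max β p)))).exists
  have hpq₀ : p ≤ q₀ := ((le_max_right β p).trans_lt hq₀m).le
  refine ⟨min q₀ β', le_min hpq₀ hpβ', lt_min ((le_max_left β p).trans_lt hq₀m) hβ',
    min_le_right _ _, neg_one_lt_mul_of_le (hp.le.trans (le_min hpq₀ hpβ')) (min_le_left _ _) hq₀⟩

section ftField

variable {Ω : Type*} {g : ℝ → ℝ} {k : ℕ} {σ : ℝ → Ω → ℝ} {t u δ M : ℝ}

lemma ftField_of_mem_Icc (hu : u ∈ Icc 0 t) (s : ℝ) (ω : Ω) :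
    ftField g k σ t u s ω = if s < u then iteratedDeriv k g (u - s) * σ s ω else 0 := by
  simp [ftField, hu.1, hu.2]

lemma ofReal_maxRpow_ftField_le {ρ q β' C₁ θ B : ℝ} (hρ : 0 < ρ) (hρq : ρ ≤ q) (hqβ' : q ≤ β')
    (hker : ∀ v ∈ Ioc 0 (t + δ), |iteratedDeriv k g v| ≤ max (C₁ * v ^ θ) B)
    (hdec : ∀ s t : ℝ, δ < s → s ≤ t → |iteratedDeriv k g t| ≤ |iteratedDeriv k g s|)
    (hbound : ∀ s ∈ Ici (-δ), ∀ ω, |σ s ω| ≤ M) (hu : u ∈ Icc 0 t) (s : ℝ) (ω : Ω) :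
    ENNReal.ofReal (maxRpow ρ q (ftField g k σ t u s ω)) ≤
      (Ioc 0 (t + δ)).indicator
          (fun v => ENNReal.ofReal (maxRpow ρ q (M * C₁ * v ^ θ) + maxRpow ρ q (M * B))) (u - s) +
        ENNReal.ofReal
          (maxRpow ρ β' (if s ≤ -δ then iteratedDeriv k g (-s) * σ s ω else 0)) := by
  have hq : 0 < q := hρ.trans_le hρq
  rw [ftField_of_mem_Icc hu]
  rcases le_or_gt u s with hus | hsu
  · rw [if_neg hus.not_gt, maxRpow_zero hρ hq, ENNReal.ofReal_zero]
    positivity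
  rw [if_pos hsu]
  rcases lt_or_ge s (-δ) with hsδ | hsδ
  · rw [if_pos hsδ.le]
    refine le_add_left (ENNReal.ofReal_le_ofReal ?_)
    refine (maxRpow_mono hρ.le hq.le ?_).trans (maxRpow_le_maxRpow hρ.le hρq hqβ' _)
    rw [abs_mul, abs_mul]
    exact mul_le_mul_of_nonneg_right (hdec (-s) (u - s) (by linarith) (by linarith [hu.1]))
      (abs_nonneg _)
  · have hv : u - s ∈ Ioc 0 (t + δ) := ⟨by linarith, by linarith [hu.2]⟩
    have hσ := hbound s hsδ ω
    rw [indicator_of_mem hv]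
    refine le_add_right (ENNReal.ofReal_le_ofReal (maxRpow_le_add_of_abs_le_max hρ.le hq.le ?_))
    have hM : 0 ≤ M := (abs_nonneg _).trans hσ
    rw [mul_assoc, ← mul_max_of_nonneg _ _ hM, abs_mul, mul_comm]
    exact mul_le_mul hσ (hker _ hv) (abs_nonneg _) hM

lemma lintegral_maxRpow_ftField_le {ρ q β' C₁ θ B : ℝ} (hρ : 0 < ρ) (hρq : ρ ≤ q) (hqβ' : q ≤ β')
    (hker : ∀ v ∈ Ioc 0 (t + δ), |iteratedDeriv k g v| ≤ max (C₁ * v ^ θ) B)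
    (hdec : ∀ s t : ℝ, δ < s → s ≤ t → |iteratedDeriv k g t| ≤ |iteratedDeriv k g s|)
    (hbound : ∀ s ∈ Ici (-δ), ∀ ω, |σ s ω| ≤ M) (hu : u ∈ Icc 0 t) (ω : Ω) :
    ∫⁻ s, ENNReal.ofReal (maxRpow ρ q (ftField g k σ t u s ω)) ≤
      (∫⁻ v in Ioc 0 (t + δ), ENNReal.ofReal (maxRpow ρ q (M * C₁ * v ^ θ) + maxRpow ρ q (M * B))) +
        ∫⁻ s, ENNReal.ofReal
          (maxRpow ρ β' (if s ≤ -δ then iteratedDeriv k g (-s) * σ s ω else 0)) := by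
  set L : ℝ → ℝ≥0∞ :=
    fun v => ENNReal.ofReal (maxRpow ρ q (M * C₁ * v ^ θ) + maxRpow ρ q (M * B))
  have hL : Measurable fun s => (Ioc 0 (t + δ)).indicator L (u - s) := by
    refine (Measurable.indicator ?_ measurableSet_Ioc).comp (measurable_const.sub measurable_id)
    unfold L maxRpow
    fun_prop
  calc _ ≤ ∫⁻ s, ((Ioc 0 (t + δ)).indicator L (u - s) + ENNReal.ofReal
          (maxRpow ρ β' (if s ≤ -δ then iteratedDeriv k g (-s) * σ s ω else 0))) :=
        lintegral_mono fun s => ofReal_maxRpow_ftField_le hρ hρq hqβ' hker hdec hbound hu s ω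
    _ = _ := by
      rw [lintegral_add_left hL, lintegral_sub_left_eq_self,
        lintegral_indicator measurableSet_Ioc]

end ftField

lemma lintegral_add_mul_rpow_lt_top {Ω : Type*} [MeasurableSpace Ω] {P : Measure Ω}
    [IsFiniteMeasure P] {e : ℝ} (he : 1 ≤ e) {A C : ℝ≥0∞} (hA : A ≠ ⊤) (hC : C ≠ ⊤)
    {Z : Ω → ℝ≥0∞} (hZ : ∫⁻ ω, Z ω ^ e ∂P < ⊤) :
    ∫⁻ ω, (A + C * Z ω) ^ e ∂P < ⊤ := by
  have he0 : 0 ≤ e := by linarith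
  calc ∫⁻ ω, (A + C * Z ω) ^ e ∂P ≤ ∫⁻ ω, 2 ^ (e - 1) * (A ^ e + C ^ e * Z ω ^ e) ∂P :=
        lintegral_mono fun ω => (ENNReal.rpow_add_le_mul_rpow_add_rpow _ _ he).trans_eq
          (by rw [ENNReal.mul_rpow_of_nonneg _ _ he0])
    _ = 2 ^ (e - 1) * (A ^ e * P univ + C ^ e * ∫⁻ ω, Z ω ^ e ∂P) := by
        rw [lintegral_const_mul' _ _ (by finiteness), lintegral_add_left measurable_const,
          lintegral_const, lintegral_const_mul' _ _ (by finiteness)]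
    _ < ⊤ := by finiteness

theorem stmt_13_general
    (k : ℕ) (α δ C₁ : ℝ)
    (hδ : 0 < δ)
    (g : ℝ → ℝ)
    (hgsmooth : ContDiffOn ℝ k g (Set.Ioi 0))
    (hgk : ∀ t ∈ Set.Ioo (0 : ℝ) δ, |iteratedDeriv k g t| ≤ C₁ * t ^ (α - k))
    (hgkdec : ∀ s t : ℝ, δ < s → s ≤ t → |iteratedDeriv k g t| ≤ |iteratedDeriv k g s|)
    (p : ℝ) (hp : 1 ≤ p)
    (ν : Measure ℝ)
    (β : ℝ) (hβ2 : β < 2)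
    (hβmom : ∀ r : ℝ, β < r → ∫⁻ x in {x : ℝ | |x| ≤ 1}, ENNReal.ofReal (|x| ^ r) ∂ν < ⊤)
    {Ω : Type*} [MeasurableSpace Ω] (P : Measure Ω) [IsProbabilityMeasure P]
    (σ : ℝ → Ω → ℝ)
    (M : ℝ) (hbound : ∀ s ∈ Set.Ici (-δ), ∀ ω, |σ s ω| ≤ M)
    (ρ β' : ℝ) (hρ0 : 0 < ρ) (hρ1 : ρ ≤ 1) (hβ' : β < β') (hβ'p : p ≤ β')
    (hH : ∫⁻ ω, (∫⁻ s : ℝ, ENNReal.ofReal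
        (max (|if s ≤ -δ then iteratedDeriv k g (-s) * σ s ω else 0| ^ ρ)
             (|if s ≤ -δ then iteratedDeriv k g (-s) * σ s ω else 0| ^ β'))) ^
          (max 1 (p / 2) : ℝ) ∂P < ⊤)
    (hαk' : k - 1 / max β p < α) :
    ∀ t : ℝ, 0 < t → ∀ a : ℝ, 0 < a → a ≤ 1 →
      (∫⁻ u in Set.Ioc (0 : ℝ) t,
          (∫⁻ ω, (levyNorm p (ν.restrict (Set.Icc (-a) a))
              (fun s => ftField g k σ t u s ω)) ^ (p : ℝ) ∂P)) < ⊤ := by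
  intro t _ a _ ha1
  have hp0 : 0 < p := by linarith
  obtain ⟨q, hpq, hβq, hqβ', hθq⟩ := exists_moment_exponent hp0 hβ' hβ'p hαk'
  have hρq : ρ ≤ q := by linarith
  have hθρ : -1 < (α - k) * ρ := neg_one_lt_mul_of_le hρ0.le hρq hθq
  obtain ⟨B, hB⟩ := exists_abs_le_max_of_continuousOn
    (hgsmooth.continuousOn_iteratedDeriv_of_isOpen le_rfl isOpen_Ioi) hδ hgk (t + δ)
  set K := ∫⁻ v in Ioc 0 (t + δ),
    ENNReal.ofReal (maxRpow ρ q (M * C₁ * v ^ (α - k)) + maxRpow ρ q (M * B))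
  have hK : K ≠ ⊤ := (Integrable.lintegral_lt_top ((integrableOn_maxRpow_mul_rpow hθρ hθq _ _).add
    (integrableOn_const (C := maxRpow ρ q (M * B)) (by simp)))).ne
  have hνa : ∀ᵐ x ∂ν.restrict (Icc (-a) a), |x| ≤ 1 :=
    ae_restrict_of_forall_mem measurableSet_Icc fun x hx => (abs_le.2 hx).trans ha1
  set Cν := ∫⁻ x in Icc (-a) a, ENNReal.ofReal (|x| ^ min 2 q) ∂ν
  have hCν : Cν ≠ ⊤ := ((lintegral_mono_set fun x hx => (abs_le.2 hx).trans ha1).trans_lt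
    (hβmom _ (lt_min hβ2 hβq))).ne
  set Z : Ω → ℝ≥0∞ := fun ω => ∫⁻ s, ENNReal.ofReal
    (maxRpow ρ β' (if s ≤ -δ then iteratedDeriv k g (-s) * σ s ω else 0))
  have hnorm : ∀ u ∈ Ioc 0 t, ∀ ω, levyNorm p (ν.restrict (Icc (-a) a))
      (fun s => ftField g k σ t u s ω) ^ p ≤ (1 + Cν * K + Cν * Z ω) ^ max 1 (p / 2) := by
    intro u hu ω
    refine (levyNorm_rpow_le_of_ae_abs_le_one hp0 hρ0.le
      (hρ1.trans (le_min one_le_two (hp.trans hpq))) (min_le_left _ _) (min_le_right _ _) hpq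
      hνa _).trans ?_
    rw [add_assoc, ← mul_add]
    gcongr
    exact lintegral_maxRpow_ftField_le hρ0 hρq hqβ' hB hgkdec hbound (Ioc_subset_Icc_self hu) ω
  refine (setLIntegral_mono' measurableSet_Ioc fun u hu => lintegral_mono (hnorm u hu)).trans_lt ?_
  rw [setLIntegral_const, Real.volume_Ioc]
  exact ENNReal.mul_lt_top (lintegral_add_mul_rpow_lt_top (le_max_left _ _) (by finiteness) hCν hH)
    ENNReal.ofReal_lt_top

/-- Lemma 4.14: integrability of the `p`-th power of the `‖·‖_{p,ν_a}`-norm of the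
random field `f_t`, where `ν_a` is the restriction of `ν` to `[−a, a]`. -/
theorem stmt_13
    (k : ℕ) (hk : 1 ≤ k) (α δ C₁ : ℝ)
    (hα : 0 < α) (hαk : α < k) (hδ : 0 < δ) (hC₁ : 0 < C₁)
    (g : ℝ → ℝ)
    (hg0 : ∀ t ≤ (0 : ℝ), g t = 0)
    (hgsmooth : ContDiffOn ℝ k g (Set.Ioi 0))
    (hgα : ∀ t ∈ Set.Ioo (0 : ℝ) δ, |g t| ≤ C₁ * t ^ α)
    (hgk : ∀ t ∈ Set.Ioo (0 : ℝ) δ, |iteratedDeriv k g t| ≤ C₁ * t ^ (α - k))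
    (hgkdec : ∀ s t : ℝ, δ < s → s ≤ t → |iteratedDeriv k g t| ≤ |iteratedDeriv k g s|)
    (p : ℝ) (hp : 1 ≤ p)
    (ν : Measure ℝ) (hν0 : ν {0} = 0)
    (hν2 : ∫⁻ x : ℝ, ENNReal.ofReal (min 1 (x ^ 2)) ∂ν < ⊤)
    (β : ℝ) (hβ0 : 0 ≤ β) (hβ2 : β < 2)
    (hβmom : ∀ r : ℝ, β < r → ∫⁻ x in {x : ℝ | |x| ≤ 1}, ENNReal.ofReal (|x| ^ r) ∂ν < ⊤)
    {Ω : Type*} [MeasurableSpace Ω] (P : Measure Ω) [IsProbabilityMeasure P]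
    (σ : ℝ → Ω → ℝ) (hmeas : Measurable (Function.uncurry σ))
    (M : ℝ) (hM : 0 < M) (hbound : ∀ s ∈ Set.Ici (-δ), ∀ ω, |σ s ω| ≤ M)
    (ρ β' : ℝ) (hρ0 : 0 < ρ) (hρ1 : ρ ≤ 1) (hβ' : β < β') (hβ'p : p ≤ β')
    (hH : ∫⁻ ω, (∫⁻ s : ℝ, ENNReal.ofReal
        (max (|if s ≤ -δ then iteratedDeriv k g (-s) * σ s ω else 0| ^ ρ)
             (|if s ≤ -δ then iteratedDeriv k g (-s) * σ s ω else 0| ^ β'))) ^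
          (max 1 (p / 2) : ℝ) ∂P < ⊤)
    (hαk' : k - 1 / max β p < α) :
    ∀ t : ℝ, 0 < t → ∀ a : ℝ, 0 < a → a ≤ 1 →
      (∫⁻ u in Set.Ioc (0 : ℝ) t,
          (∫⁻ ω, (levyNorm p (ν.restrict (Set.Icc (-a) a))
              (fun s => ftField g k σ t u s ω)) ^ (p : ℝ) ∂P)) < ⊤ :=
  stmt_13_general k α δ C₁ hδ g hgsmooth hgk hgkdec p hp ν β hβ2 hβmom P σ M hbound ρ β' hρ0 hρ1 hβ'
    hβ'p hH hαk'

end
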